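/- arXiv:2010.11895 — 6 statements merged into one kernel-verified Lean document; each statement's English description precedes it below -/
import Mathlib

section
/- (Lemma 4.1) In the deterministic hard instance, for every policy π and every level h ∈ {1,…,H} there exists θ_h ∈ ℝ^d such that Q_h(c, a) = ⟨θ_h, φ(c, a)⟩ for all states c ∈ {1,…,d̂+1} and actions a ∈ {a₁, a₂}; in particular one may take θ_H = r₀·(e₁ + ⋯ + e_d) and, for h < H, θ_h = Σ_{c=1}^{d̂} r₀·d̂^{(H−h)/2}·e_c + Σ_{c=1}^{d̂} Q_h(c, a₂)·e_{c+d̂}. -/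
open scoped RealInnerProductSpace

/-- Expected reward at level `h` (1-indexed) of the deterministic hard instance.
States are indexed by `c : Fin (d̂ + 1)`, where indices `< d̂` correspond to the states
`1, …, d̂` and the index `d̂` corresponds to the special state `d̂ + 1`. -/
noncomputable def detReward (dh H : ℕ) (r0 : ℝ) (h : ℕ) (c : Fin (dh + 1)) : ℝ :=
  if h = H then (if (c : ℕ) = dh then r0 * Real.sqrt dh else r0)
  else (if (c : ℕ) = dh then r0 * (Real.sqrt dh - 1) * Real.sqrt dh ^ (H - h) else 0)

/-- Transition of the deterministic hard instance: action `false` (= a₁) leads to the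
special state `d̂ + 1`, action `true` (= a₂) keeps the same state index. -/
def detNext (dh : ℕ) (c : Fin (dh + 1)) (a : Bool) : Fin (dh + 1) :=
  if a then c else ⟨dh, Nat.lt_succ_self dh⟩

/-- `detQaux dh H r0 π t` is the Q-function at level `H - t`, defined by backward recursion:
at the last level it is the expected reward, and otherwise it is the expected reward plus the
next-level Q-value at the action chosen by the policy `π`. -/
noncomputable def detQaux (dh H : ℕ) (r0 : ℝ) (π : ℕ → Fin (dh + 1) → Bool) :
    ℕ → Fin (dh + 1) → Bool → ℝ
  | 0, c, _ => detReward dh H r0 H c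
  | t + 1, c, a =>
      detReward dh H r0 (H - (t + 1)) c +
        detQaux dh H r0 π t (detNext dh c a) (π (H - t) (detNext dh c a))

/-- The Q-function of the policy `π` at level `h ∈ {1, …, H}`. -/
noncomputable def detQ (dh H : ℕ) (r0 : ℝ) (π : ℕ → Fin (dh + 1) → Bool) (h : ℕ) :
    Fin (dh + 1) → Bool → ℝ :=
  detQaux dh H r0 π (H - h)

/-- Feature map of the deterministic hard instance (`d = 2 * d̂`): `φ(c, a₁) = e_c`,
`φ(c, a₂) = e_{c + d̂}` for `c ≤ d̂`, and `φ(d̂+1, a) = d̂^{-1/2} (e₁ + ⋯ + e_{d̂})`. -/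
noncomputable def detPhi (dh : ℕ) (e : Fin (2 * dh) → EuclideanSpace ℝ (Fin (2 * dh)))
    (c : Fin (dh + 1)) (a : Bool) : EuclideanSpace ℝ (Fin (2 * dh)) :=
  if hc : (c : ℕ) < dh then
    (if a then e ⟨(c : ℕ) + dh, by omega⟩ else e ⟨(c : ℕ), by omega⟩)
  else (Real.sqrt dh)⁻¹ • ∑ j : Fin dh, e ⟨(j : ℕ), by have := j.isLt; omega⟩

open Finset Function

/-!
Whatever the policy, the value of the special state `d̂ + 1` at level `h` is
`r₀ d̂^{(H-h+1)/2}`, since its rewards telescope, and action `a₁` from an ordinary state at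
level `h` leads to it at level `h + 1`, so has value `r₀ d̂^{(H-h)/2}`. So it suffices that `θ_h`
have inner product `r₀ d̂^{(H-h)/2}` with each `e_c` and `Q_h(c, a₂)` with each `e_{c+d̂}`; as
`φ(d̂+1, ·)` is the normalised sum of the `e_c`, its inner product with `θ_h` is
`√d̂ · r₀ d̂^{(H-h)/2}`, which is exactly the value of the special state.
-/

section Orthonormal

variable {ι κ E : Type*} [NormedAddCommGroup E] [InnerProductSpace ℝ E] [Fintype κ] {v : ι → E}

lemma Orthonormal.inner_sum_smul_comp_self (hv : Orthonormal ℝ v) {σ : κ → ι}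
    (hσ : Injective σ) (g : κ → ℝ) (c : κ) :
    ⟪∑ c', g c' • v (σ c'), v (σ c)⟫ = g c :=
  (hv.comp σ hσ).inner_left_fintype g c

lemma Orthonormal.inner_sum_smul_comp_of_forall_ne (hv : Orthonormal ℝ v) {σ : κ → ι} {k : ι}
    (hk : ∀ c, σ c ≠ k) (g : κ → ℝ) :
    ⟪∑ c, g c • v (σ c), v k⟫ = 0 := by
  simp [sum_inner, real_inner_smul_left, hv.inner_eq_zero (hk _)]

lemma Orthonormal.inner_smul_sum_left [Fintype ι] (hv : Orthonormal ℝ v) (r : ℝ) (k : ι) :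
    ⟪r • ∑ i, v i, v k⟫ = r := by
  simpa [smul_sum] using hv.inner_sum_smul_comp_self injective_id (fun _ => r) k

end Orthonormal

section DetHardInstance

variable {dh H : ℕ} {r0 : ℝ}

lemma detNext_false (c : Fin (dh + 1)) : detNext dh c false = Fin.last dh := rfl

lemma detNext_last (a : Bool) : detNext dh (Fin.last dh) a = Fin.last dh := by
  cases a <;> rfl

lemma detQaux_last (π : ℕ → Fin (dh + 1) → Bool) {t : ℕ} (ht : t < H) (a : Bool) :
    detQaux dh H r0 π t (Fin.last dh) a = r0 * √dh ^ (t + 1) := by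
  induction t generalizing a with
  | zero => simp [detQaux, detReward]
  | succ t ih =>
    rw [detQaux, detNext_last, ih (by omega), detReward, if_neg (by omega),
      if_pos (Fin.val_last dh), show H - (H - (t + 1)) = t + 1 by omega]
    ring

lemma detQ_last (π : ℕ → Fin (dh + 1) → Bool) {h : ℕ} (h1 : 1 ≤ h) (hH : h ≤ H) (a : Bool) :
    detQ dh H r0 π h (Fin.last dh) a = √dh * (r0 * √dh ^ (H - h)) := by
  rw [detQ, detQaux_last π (by omega)]
  ring

lemma detQ_self_castSucc (π : ℕ → Fin (dh + 1) → Bool) (c : Fin dh) (a : Bool) :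
    detQ dh H r0 π H c.castSucc a = r0 := by
  simp [detQ, detQaux, detReward, c.isLt.ne]

lemma detQ_castSucc_false (π : ℕ → Fin (dh + 1) → Bool) {h : ℕ} (hH : h ≤ H) (c : Fin dh) :
    detQ dh H r0 π h c.castSucc false = r0 * √dh ^ (H - h) := by
  obtain rfl | hlt := hH.eq_or_lt
  · simpa using detQ_self_castSucc π c false
  · obtain ⟨s, hs⟩ : ∃ s, H - h = s + 1 := ⟨H - h - 1, by omega⟩
    rw [detQ, hs, detQaux, detNext_false, detQaux_last π (by omega), detReward,
      if_neg (by omega), if_neg (by simp [Fin.val_castSucc, c.isLt.ne]), zero_add]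

lemma eq_inner_detPhi_of_inner_basis {e : Fin (2 * dh) → EuclideanSpace ℝ (Fin (2 * dh))}
    {θ : EuclideanSpace ℝ (Fin (2 * dh))} {Q : Fin (dh + 1) → Bool → ℝ} {α : ℝ}
    (hlow : ∀ c : Fin dh, ⟪θ, e ⟨c, by omega⟩⟫ = α)
    (hhigh : ∀ c : Fin dh, ⟪θ, e ⟨c + dh, by omega⟩⟫ = Q c.castSucc true)
    (hQlow : ∀ c : Fin dh, Q c.castSucc false = α)
    (hQlast : ∀ a, Q (Fin.last dh) a = √dh * α) (c : Fin (dh + 1)) (a : Bool) :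
    Q c a = ⟪θ, detPhi dh e c a⟫ := by
  induction c using Fin.lastCases with
  | last =>
    rw [detPhi, dif_neg (by simp), real_inner_smul_right, inner_sum]
    simp only [hlow, sum_const, card_univ, Fintype.card_fin, nsmul_eq_mul]
    rw [hQlast, ← mul_assoc, inv_mul_eq_div, Real.div_sqrt]
  | cast c =>
    rw [detPhi, dif_pos (by simp)]
    cases a
    · simpa [hQlow] using (hlow c).symm
    · simpa using (hhigh c).symm

end DetHardInstance

/-- Lemma 4.1: in the deterministic hard instance, for every policy `π` and every level
`h ∈ {1, …, H}` there is `θ_h ∈ ℝ^d` with `Q_h(c, a) = ⟪θ_h, φ(c, a)⟫` for all states and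
actions; one may take `θ_H = r₀ (e₁ + ⋯ + e_d)` and, for `h < H`,
`θ_h = ∑_{c=1}^{d̂} r₀ d̂^{(H-h)/2} e_c + ∑_{c=1}^{d̂} Q_h(c, a₂) e_{c+d̂}`. -/
theorem stmt0 (dh H : ℕ) (r0 : ℝ)
    (b : OrthonormalBasis (Fin (2 * dh)) ℝ (EuclideanSpace ℝ (Fin (2 * dh))))
    (π : ℕ → Fin (dh + 1) → Bool) (h : ℕ) (hh1 : 1 ≤ h) (hhH : h ≤ H) :
    ∃ θ : EuclideanSpace ℝ (Fin (2 * dh)),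
      (∀ (c : Fin (dh + 1)) (a : Bool),
        detQ dh H r0 π h c a = ⟪θ, detPhi dh (⇑b) c a⟫) ∧
      θ = if h = H then r0 • ∑ j : Fin (2 * dh), b j
          else (∑ c : Fin dh,
                  (r0 * Real.sqrt dh ^ (H - h)) • b ⟨(c : ℕ), by have := c.isLt; omega⟩) +
               ∑ c : Fin dh,
                  detQ dh H r0 π h ⟨(c : ℕ), by have := c.isLt; omega⟩ true •
                    b ⟨(c : ℕ) + dh, by have := c.isLt; omega⟩ := by
  have hb := b.orthonormal
  have hlow_inj : Injective fun c : Fin dh => (⟨c, by omega⟩ : Fin (2 * dh)) :=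
    fun _ _ hc => by simpa [Fin.ext_iff] using hc
  have hhigh_inj : Injective fun c : Fin dh => (⟨c + dh, by omega⟩ : Fin (2 * dh)) :=
    fun _ _ hc => by simpa [Fin.ext_iff] using hc
  refine ⟨_, eq_inner_detPhi_of_inner_basis (fun c => ?_) (fun c => ?_)
    (detQ_castSucc_false π hhH) (detQ_last π hh1 hhH), rfl⟩
  all_goals split_ifs with hlast
  · rw [hb.inner_smul_sum_left, hlast, Nat.sub_self, pow_zero, mul_one]
  · rw [inner_add_left, hb.inner_sum_smul_comp_self hlow_inj (fun _ => r0 * √dh ^ (H - h)),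
      hb.inner_sum_smul_comp_of_forall_ne (fun c' => by simp only [Ne, Fin.ext_iff]; omega),
      add_zero]
  · subst hlast
    exact (hb.inner_smul_sum_left r0 _).trans (detQ_self_castSucc π c true).symm
  · rw [inner_add_left, hb.inner_sum_smul_comp_self hhigh_inj (fun c => detQ dh H r0 π h _ true),
      hb.inner_sum_smul_comp_of_forall_ne (fun c' => by simp only [Ne, Fin.ext_iff]; omega),
      zero_add]
    rfl
end

section
/- In the deterministic hard instance, for every policy π and both actions a, the value at the state d̂+1 of level 1 satisfies Q₁(d̂+1, a) = r₀·d̂^{H/2}. Consequently the value of every policy started from this state equals 0 when r₀ = 0 and equals 1 when r₀ = d̂^{−H/2}. -/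

lemma detNext_special (dh : ℕ) (a : Bool) :
    detNext dh ⟨dh, Nat.lt_succ_self dh⟩ a = ⟨dh, Nat.lt_succ_self dh⟩ := by
  cases a <;> rfl

lemma detQaux_special (dh H : ℕ) (r0 : ℝ) (π : ℕ → Fin (dh + 1) → Bool) :
    ∀ t, t < H → ∀ a,
      detQaux dh H r0 π t ⟨dh, Nat.lt_succ_self dh⟩ a = r0 * Real.sqrt dh ^ (t + 1) := by
  intro t
  induction t with
  | zero =>
    intro _ a
    simp [detQaux, detReward]
  | succ t ih =>
    intro ht a
    rw [detQaux, detNext_special, ih (Nat.lt_of_succ_lt ht)]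
    have h1 : H - (t + 1) ≠ H := by omega
    have h2 : H - (H - (t + 1)) = t + 1 := by omega
    rw [detReward]
    simp only [h1, if_false, if_pos rfl, h2, if_true]
    ring

/-- In the deterministic hard instance, for every policy `π` and both actions `a`, the value at
the special state `d̂ + 1` of level 1 satisfies `Q₁(d̂+1, a) = r₀ d̂^{H/2}`; consequently the
value of every policy started from this state is `0` when `r₀ = 0` and `1` when
`r₀ = d̂^{-H/2}`. -/
theorem stmt1 (dh H : ℕ) (hdh : 1 ≤ dh) (hH : 1 ≤ H) (r0 : ℝ)
    (π : ℕ → Fin (dh + 1) → Bool) (a : Bool) :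
    detQ dh H r0 π 1 ⟨dh, Nat.lt_succ_self dh⟩ a = r0 * Real.sqrt dh ^ H ∧
    (r0 = 0 → detQ dh H r0 π 1 ⟨dh, Nat.lt_succ_self dh⟩ a = 0) ∧
    (r0 = (Real.sqrt dh ^ H)⁻¹ → detQ dh H r0 π 1 ⟨dh, Nat.lt_succ_self dh⟩ a = 1) := by
  have key : detQ dh H r0 π 1 ⟨dh, Nat.lt_succ_self dh⟩ a = r0 * Real.sqrt dh ^ H := by
    rw [detQ, detQaux_special dh H r0 π (H - 1) (by omega) a]
    have h3 : H - 1 + 1 = H := by omega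
    rw [h3]
  refine ⟨key, fun h0 => by subst h0; simpa using key, fun h0 => ?_⟩
  have hpos : (0:ℝ) < Real.sqrt dh ^ H := by
    apply pow_pos
    exact Real.sqrt_pos.mpr (by exact_mod_cast Nat.lt_of_lt_of_le Nat.zero_lt_one hdh)
  rw [key, h0, inv_mul_cancel₀ (ne_of_gt hpos)]
end

section
/- (Lemma 5.1) Under the LSPE setup, θ̂₁ − θ₁ = Σ_{h=1}^{H} ( ∏_{h′=1}^{h−1} Λ̂_{h′}^{−1}Φ_{h′}ᵀΦ̄_{h′+1} ) · ( Λ̂_h^{−1}Φ_hᵀξ_h − λ·Λ̂_h^{−1}θ_h ), where the matrix product over h′ is taken in increasing order of h′ and the empty product (h = 1) is the identity matrix I_d. In particular, for any positive semidefinite d×d matrix Λ̄₁, the squared weighted error (θ̂₁ − θ₁)ᵀΛ̄₁(θ̂₁ − θ₁) equals the squared Λ̄₁-weighted norm of this sum. -/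
/-!
The estimation error `θ̂_h - θ_h` obeys the affine backward recursion
`θ̂_h - θ_h = e_h + Λ̂_h⁻¹ Φ_hᵀ Φ̄_{h+1} (θ̂_{h+1} - θ_{h+1})`, with
`e_h = Λ̂_h⁻¹ Φ_hᵀ ξ_h - λ Λ̂_h⁻¹ θ_h`: substituting the realizability relation into the LSPE update
leaves `Λ̂_h⁻¹ Φ_hᵀ Φ_h θ_h = θ_h - λ Λ̂_h⁻¹ θ_h`, because `Φ_hᵀ Φ_h = Λ̂_h - λ I`.
Unrolling the recursion from `h = 1` down to the terminal value `θ̂_{H+1} - θ_{H+1} = 0` gives the sum.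
-/

open Matrix

/-- The ridge-regularized covariance matrix `Λ̂ = Φᵀ Φ + λ I`. -/
noncomputable def Lhat {N d : ℕ} (lam : ℝ) (Φ : Matrix (Fin N) (Fin d) ℝ) :
    Matrix (Fin d) (Fin d) ℝ :=
  Φᵀ * Φ + lam • 1

section AffineRecursion

variable {n R : Type*} [Fintype n] [DecidableEq n] [CommRing R]

theorem eq_sum_of_affine_recursion (g : ℕ → Matrix n n R) (e x : ℕ → n → R) (m : ℕ)
    (hstep : ∀ k < m, x k = e k + g k *ᵥ x (k + 1)) :
    x 0 = ∑ k ∈ Finset.range m, ((List.range k).map g).prod *ᵥ e k +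
      ((List.range m).map g).prod *ᵥ x m := by
  induction m with
  | zero => simp
  | succ m ih =>
    rw [ih fun k hk => hstep k (by omega), hstep m (by omega), Finset.sum_range_succ,
      List.range_succ, List.map_append, List.prod_append, mulVec_add, ← mulVec_mulVec]
    simp only [List.map_cons, List.map_nil, List.prod_cons, List.prod_nil, mul_one, add_assoc]

end AffineRecursion

theorem Lhat_posDef {N d : ℕ} {lam : ℝ} (hlam : 0 < lam) (Φ : Matrix (Fin N) (Fin d) ℝ) :
    (Lhat lam Φ).PosDef :=
  PosDef.posSemidef_add (by simpa using posSemidef_conjTranspose_mul_self Φ) (PosDef.one.smul hlam)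

theorem inv_Lhat_mul_gram {N d : ℕ} {lam : ℝ} (hlam : 0 < lam) (Φ : Matrix (Fin N) (Fin d) ℝ) :
    (Lhat lam Φ)⁻¹ * (Φᵀ * Φ) = 1 - lam • (Lhat lam Φ)⁻¹ := by
  have hunit : IsUnit (Lhat lam Φ).det := (isUnit_iff_isUnit_det _).mp (Lhat_posDef hlam Φ).isUnit
  rw [show Φᵀ * Φ = Lhat lam Φ - lam • 1 by simp [Lhat], mul_sub, nonsing_inv_mul _ hunit,
    Matrix.mul_smul, mul_one]

theorem lspe_error_step {N d : ℕ} {lam : ℝ} (hlam : 0 < lam) (Φ Φnext : Matrix (Fin N) (Fin d) ℝ)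
    (r ξ : Fin N → ℝ) (θ θnext θhat θhatnext : Fin d → ℝ)
    (hreal : r + Φnext *ᵥ θnext = Φ *ᵥ θ + ξ)
    (hθhat : θhat = (Lhat lam Φ)⁻¹ *ᵥ (Φᵀ *ᵥ (r + Φnext *ᵥ θhatnext))) :
    θhat - θ = ((Lhat lam Φ)⁻¹ *ᵥ (Φᵀ *ᵥ ξ) - lam • ((Lhat lam Φ)⁻¹ *ᵥ θ)) +
      ((Lhat lam Φ)⁻¹ * Φᵀ * Φnext) *ᵥ (θhatnext - θnext) := by
  have hr : r + Φnext *ᵥ θhatnext = Φ *ᵥ θ + ξ + Φnext *ᵥ (θhatnext - θnext) := by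
    rw [mulVec_sub, ← hreal]
    abel
  rw [hθhat, hr]
  simp only [mulVec_add, mulVec_mulVec, ← Matrix.mul_assoc]
  rw [Matrix.mul_assoc, inv_Lhat_mul_gram hlam, sub_mulVec, one_mulVec, smul_mulVec]
  abel

theorem stmt3_general (N d H : ℕ)
    (lam : ℝ) (hlam : 0 < lam)
    (Φ Φbar : ℕ → Matrix (Fin N) (Fin d) ℝ) (r ξ : ℕ → Fin N → ℝ)
    (θ θhat : ℕ → Fin d → ℝ)
    (hθ : θ (H + 1) = 0)
    (hreal : ∀ h, 1 ≤ h → h ≤ H →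
      r h + Φbar (h + 1) *ᵥ θ (h + 1) = Φ h *ᵥ θ h + ξ h)
    (hθhat0 : θhat (H + 1) = 0)
    (hθhat : ∀ h, 1 ≤ h → h ≤ H →
      θhat h = (Lhat lam (Φ h))⁻¹ *ᵥ ((Φ h)ᵀ *ᵥ (r h + Φbar (h + 1) *ᵥ θhat (h + 1)))) :
    θhat 1 - θ 1 =
      (∑ h ∈ Finset.Icc 1 H,
        (((List.range (h - 1)).map
            fun i => (Lhat lam (Φ (i + 1)))⁻¹ * (Φ (i + 1))ᵀ * Φbar (i + 2)).prod) *ᵥ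
          ((Lhat lam (Φ h))⁻¹ *ᵥ ((Φ h)ᵀ *ᵥ ξ h) - lam • ((Lhat lam (Φ h))⁻¹ *ᵥ θ h))) ∧
    ∀ Λbar1 : Matrix (Fin d) (Fin d) ℝ, Λbar1.PosSemidef →
      (θhat 1 - θ 1) ⬝ᵥ (Λbar1 *ᵥ (θhat 1 - θ 1)) =
      (∑ h ∈ Finset.Icc 1 H,
        (((List.range (h - 1)).map
            fun i => (Lhat lam (Φ (i + 1)))⁻¹ * (Φ (i + 1))ᵀ * Φbar (i + 2)).prod) *ᵥ
          ((Lhat lam (Φ h))⁻¹ *ᵥ ((Φ h)ᵀ *ᵥ ξ h) - lam • ((Lhat lam (Φ h))⁻¹ *ᵥ θ h))) ⬝ᵥ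
      (Λbar1 *ᵥ
        ∑ h ∈ Finset.Icc 1 H,
          (((List.range (h - 1)).map
              fun i => (Lhat lam (Φ (i + 1)))⁻¹ * (Φ (i + 1))ᵀ * Φbar (i + 2)).prod) *ᵥ
            ((Lhat lam (Φ h))⁻¹ *ᵥ ((Φ h)ᵀ *ᵥ ξ h) - lam • ((Lhat lam (Φ h))⁻¹ *ᵥ θ h))) := by
  have hunrolled := eq_sum_of_affine_recursion
    (fun i => (Lhat lam (Φ (i + 1)))⁻¹ * (Φ (i + 1))ᵀ * Φbar (i + 2))
    (fun k => (Lhat lam (Φ (k + 1)))⁻¹ *ᵥ ((Φ (k + 1))ᵀ *ᵥ ξ (k + 1)) -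
      lam • ((Lhat lam (Φ (k + 1)))⁻¹ *ᵥ θ (k + 1)))
    (fun k => θhat (k + 1) - θ (k + 1)) H fun k hk =>
      lspe_error_step hlam _ _ _ _ _ _ _ _ (hreal (k + 1) (by omega) (by omega))
        (hθhat (k + 1) (by omega) (by omega))
  have herror : θhat 1 - θ 1 = ∑ h ∈ Finset.Icc 1 H,
      (((List.range (h - 1)).map
          fun i => (Lhat lam (Φ (i + 1)))⁻¹ * (Φ (i + 1))ᵀ * Φbar (i + 2)).prod) *ᵥ
        ((Lhat lam (Φ h))⁻¹ *ᵥ ((Φ h)ᵀ *ᵥ ξ h) - lam • ((Lhat lam (Φ h))⁻¹ *ᵥ θ h)) := by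
    rw [hunrolled, hθhat0, hθ, sub_zero, mulVec_zero, add_zero,
      ← Finset.Ico_add_one_right_eq_Icc, Finset.sum_Ico_eq_sum_range]
    simp only [Nat.add_sub_cancel, add_comm 1]
  exact ⟨herror, fun _ _ => by rw [herror]⟩

/-- Lemma 5.1: under the LSPE setup,
`θ̂₁ - θ₁ = ∑_{h=1}^H (∏_{h'=1}^{h-1} Λ̂_{h'}⁻¹ Φ_{h'}ᵀ Φ̄_{h'+1}) (Λ̂_h⁻¹ Φ_hᵀ ξ_h - λ Λ̂_h⁻¹ θ_h)`,
the matrix product being taken in increasing order of `h'` (empty product = identity);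
in particular, for any positive semidefinite `Λ̄₁`, the squared `Λ̄₁`-weighted error
`(θ̂₁ - θ₁)ᵀ Λ̄₁ (θ̂₁ - θ₁)` equals the squared `Λ̄₁`-weighted norm of this sum. -/
theorem stmt3 (N d H : ℕ) (hN : 1 ≤ N) (hd : 1 ≤ d) (hH : 1 ≤ H)
    (lam : ℝ) (hlam : 0 < lam)
    (Φ Φbar : ℕ → Matrix (Fin N) (Fin d) ℝ) (r ξ : ℕ → Fin N → ℝ)
    (θ θhat : ℕ → Fin d → ℝ)
    (hΦbar : Φbar (H + 1) = 0) (hθ : θ (H + 1) = 0)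
    (hreal : ∀ h, 1 ≤ h → h ≤ H →
      r h + Φbar (h + 1) *ᵥ θ (h + 1) = Φ h *ᵥ θ h + ξ h)
    (hθhat0 : θhat (H + 1) = 0)
    (hθhat : ∀ h, 1 ≤ h → h ≤ H →
      θhat h = (Lhat lam (Φ h))⁻¹ *ᵥ ((Φ h)ᵀ *ᵥ (r h + Φbar (h + 1) *ᵥ θhat (h + 1)))) :
    θhat 1 - θ 1 =
      (∑ h ∈ Finset.Icc 1 H,
        (((List.range (h - 1)).map
            fun i => (Lhat lam (Φ (i + 1)))⁻¹ * (Φ (i + 1))ᵀ * Φbar (i + 2)).prod) *ᵥ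
          ((Lhat lam (Φ h))⁻¹ *ᵥ ((Φ h)ᵀ *ᵥ ξ h) - lam • ((Lhat lam (Φ h))⁻¹ *ᵥ θ h))) ∧
    ∀ Λbar1 : Matrix (Fin d) (Fin d) ℝ, Λbar1.PosSemidef →
      (θhat 1 - θ 1) ⬝ᵥ (Λbar1 *ᵥ (θhat 1 - θ 1)) =
      (∑ h ∈ Finset.Icc 1 H,
        (((List.range (h - 1)).map
            fun i => (Lhat lam (Φ (i + 1)))⁻¹ * (Φ (i + 1))ᵀ * Φbar (i + 2)).prod) *ᵥ
          ((Lhat lam (Φ h))⁻¹ *ᵥ ((Φ h)ᵀ *ᵥ ξ h) - lam • ((Lhat lam (Φ h))⁻¹ *ᵥ θ h))) ⬝ᵥ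
      (Λbar1 *ᵥ
        ∑ h ∈ Finset.Icc 1 H,
          (((List.range (h - 1)).map
              fun i => (Lhat lam (Φ (i + 1)))⁻¹ * (Φ (i + 1))ᵀ * Φbar (i + 2)).prod) *ᵥ
            ((Lhat lam (Φ h))⁻¹ *ᵥ ((Φ h)ᵀ *ᵥ ξ h) - lam • ((Lhat lam (Φ h))⁻¹ *ᵥ θ h))) :=
  stmt3_general N d H lam hlam Φ Φbar r ξ θ θhat hθ hreal hθhat0 hθhat
end

section
/- Let 0 < ε ≤ 1/2 and let n ∈ ℕ. If there exists a measurable set A ⊆ {0,1}^n such that Bernoulli(1/2)^{⊗n}(A) ≥ 9/10 and Bernoulli((1+ε)/2)^{⊗n}(A) ≤ 1/10, then n ≥ 1/ε². -/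
open MeasureTheory

/-- The Bernoulli measure on `Bool` (standing for `{0,1}`, with `true = 1`): it assigns mass
`p` to the outcome `true` and mass `1 - p` to the outcome `false`. -/
noncomputable def bern (p : ℝ) : Measure Bool :=
  ENNReal.ofReal (1 - p) • Measure.dirac false + ENNReal.ofReal p • Measure.dirac true

noncomputable def w (p : ℝ) : Bool → ℝ := fun b => if b then p else 1 - p

lemma w_nonneg {p : ℝ} (h0 : 0 ≤ p) (h1 : p ≤ 1) (b : Bool) : 0 ≤ w p b := by
  cases b <;> simp [w] <;> linarith

lemma bern_singleton (p : ℝ) (b : Bool) : bern p {b} = ENNReal.ofReal (w p b) := by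
  cases b <;> simp [bern, w, Measure.dirac_apply]

instance (p : ℝ) : IsFiniteMeasure (bern p) := ⟨by
  simp only [bern, Measure.coe_add, Measure.coe_smul, Pi.add_apply, Pi.smul_apply,
    measure_univ, smul_eq_mul, mul_one]
  exact ENNReal.add_lt_top.2 ⟨ENNReal.ofReal_lt_top, ENNReal.ofReal_lt_top⟩⟩

lemma pi_bern_apply (p : ℝ) (h0 : 0 ≤ p) (h1 : p ≤ 1) {n : ℕ}
    (A : Set (Fin n → Bool)) (hA : MeasurableSet A) :
    (Measure.pi fun _ : Fin n => bern p) A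
      = ENNReal.ofReal (∑ x : Fin n → Bool, A.indicator (fun x => ∏ i, w p (x i)) x) := by
  rw [← Measure.tsum_indicator_apply_singleton _ _ hA, tsum_fintype,
    ENNReal.ofReal_sum_of_nonneg]
  · refine Finset.sum_congr rfl fun x _ => ?_
    by_cases hx : x ∈ A
    · rw [Set.indicator_of_mem hx, Set.indicator_of_mem hx,
        ← Set.univ_pi_singleton x, Measure.pi_pi,
        ENNReal.ofReal_prod_of_nonneg (fun i _ => w_nonneg h0 h1 _)]
      exact Finset.prod_congr rfl fun i _ => bern_singleton p (x i)
    · rw [Set.indicator_of_notMem hx, Set.indicator_of_notMem hx, ENNReal.ofReal_zero]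
  · intro x _
    exact Set.indicator_nonneg (fun y _ => Finset.prod_nonneg fun i _ => w_nonneg h0 h1 _) x

lemma sqrt_prod {ι : Type*} (s : Finset ι) (f : ι → ℝ) (h : ∀ i ∈ s, 0 ≤ f i) :
    Real.sqrt (∏ i ∈ s, f i) = ∏ i ∈ s, Real.sqrt (f i) := by
  induction s using Finset.cons_induction with
  | empty => simp
  | cons a s ha ih =>
    rw [Finset.prod_cons, Finset.prod_cons, Real.sqrt_mul (h a (Finset.mem_cons_self a s)),
      ih (fun i hi => h i (Finset.mem_cons_of_mem hi))]

lemma sum_prod_w {n : ℕ} (h : Bool → ℝ) :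
    ∑ x : Fin n → Bool, ∏ i, h (x i) = (∑ b : Bool, h b) ^ n := by
  rw [← Fintype.piFinset_univ, ← Finset.prod_univ_sum, Finset.prod_const, Finset.card_univ,
    Fintype.card_fin]

set_option maxHeartbeats 2000000 in
/-- Hypothesis-testing lower bound: if `0 < ε ≤ 1/2` and a measurable set `A ⊆ {0,1}^n`
satisfies `Bernoulli(1/2)^{⊗n}(A) ≥ 9/10` and `Bernoulli((1+ε)/2)^{⊗n}(A) ≤ 1/10`, then
`n ≥ 1/ε²`. -/
theorem stmt11 (ε : ℝ) (hε0 : 0 < ε) (hε : ε ≤ 1 / 2) (n : ℕ)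
    (A : Set (Fin n → Bool)) (hA : MeasurableSet A)
    (h1 : (Measure.pi fun _ : Fin n => bern (1 / 2)) A ≥ 9 / 10)
    (h2 : (Measure.pi fun _ : Fin n => bern ((1 + ε) / 2)) A ≤ 1 / 10) :
    1 / ε ^ 2 ≤ (n : ℝ) := by
  classical
  set p : ℝ := 1 / 2 with hp
  set q : ℝ := (1 + ε) / 2 with hq
  have hp0 : (0:ℝ) ≤ p := by norm_num
  have hp1 : p ≤ 1 := by norm_num
  have hq0 : (0:ℝ) ≤ q := by rw [hq]; linarith
  have hq1 : q ≤ 1 := by rw [hq]; linarith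
  set f : (Fin n → Bool) → ℝ := fun x => ∏ i, w p (x i) with hfdef
  set g : (Fin n → Bool) → ℝ := fun x => ∏ i, w q (x i) with hgdef
  have hf : ∀ x, 0 ≤ f x := fun x => Finset.prod_nonneg fun i _ => w_nonneg hp0 hp1 _
  have hg : ∀ x, 0 ≤ g x := fun x => Finset.prod_nonneg fun i _ => w_nonneg hq0 hq1 _
  -- turn measure hypotheses into real sums
  rw [pi_bern_apply p hp0 hp1 A hA] at h1
  rw [pi_bern_apply q hq0 hq1 A hA] at h2
  have e910 : ((9:ENNReal) / 10) = ENNReal.ofReal ((9:ℝ)/10) := by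
    rw [ENNReal.ofReal_div_of_pos (by norm_num)]; norm_num
  have e110 : ((1:ENNReal) / 10) = ENNReal.ofReal ((1:ℝ)/10) := by
    rw [ENNReal.ofReal_div_of_pos (by norm_num)]; norm_num
  set s : Finset (Fin n → Bool) := Finset.univ.filter (· ∈ A) with hsdef
  have hind : ∀ (h : (Fin n → Bool) → ℝ),
      ∑ x : Fin n → Bool, A.indicator h x = ∑ x ∈ s, h x := by
    intro h
    rw [hsdef, Finset.sum_filter]
    exact Finset.sum_congr rfl fun x _ => by
      by_cases hx : x ∈ A <;> simp [Set.indicator_apply, hx]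
  have hS1 : (9:ℝ)/10 ≤ ∑ x ∈ s, f x := by
    rw [← hind f]
    refine (ENNReal.ofReal_le_ofReal_iff ?_).1 (by rw [← e910]; exact h1)
    exact Finset.sum_nonneg fun x _ => Set.indicator_nonneg (fun y _ => hf y) x
  have hS2 : ∑ x ∈ s, g x ≤ (1:ℝ)/10 := by
    rw [← hind g]
    exact (ENNReal.ofReal_le_ofReal_iff (by norm_num)).1 (by rw [← e110]; exact h2)
  -- total masses are 1
  have hsum_w : ∀ r : ℝ, ∑ b : Bool, w r b = 1 := by
    intro r; simp [w]
  have hfsum : ∑ x : Fin n → Bool, f x = 1 := by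
    have h := sum_prod_w (n := n) (w p)
    rw [hsum_w p, one_pow] at h
    exact h
  have hgsum : ∑ x : Fin n → Bool, g x = 1 := by
    have h := sum_prod_w (n := n) (w q)
    rw [hsum_w q, one_pow] at h
    exact h
  -- bounds on the four partial sums
  have hsub : ∀ (h : (Fin n → Bool) → ℝ), (∀ x, 0 ≤ h x) →
      ∀ t : Finset (Fin n → Bool), ∑ x ∈ t, h x ≤ ∑ x : Fin n → Bool, h x :=
    fun h hh t => Finset.sum_le_sum_of_subset_of_nonneg (Finset.subset_univ t)
      (fun x _ _ => hh x)
  have hfc : ∑ x ∈ sᶜ, f x ≤ 1/10 := by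
    have : ∑ x ∈ s, f x + ∑ x ∈ sᶜ, f x = 1 := by
      rw [Finset.sum_add_sum_compl]; exact hfsum
    linarith
  have hgc : ∑ x ∈ sᶜ, g x ≤ 1 := le_trans (hsub g hg sᶜ) (le_of_eq hgsum)
  have hfs : ∑ x ∈ s, f x ≤ 1 := le_trans (hsub f hf s) (le_of_eq hfsum)
  -- Cauchy-Schwarz on each part
  have sqrt110 : Real.sqrt 1 = 1 := Real.sqrt_one
  have cs1 : ∑ x ∈ s, Real.sqrt (f x) * Real.sqrt (g x) ≤ Real.sqrt (1/10) := by
    refine le_trans (Real.sum_sqrt_mul_sqrt_le s hf hg) ?_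
    calc Real.sqrt (∑ x ∈ s, f x) * Real.sqrt (∑ x ∈ s, g x)
        ≤ 1 * Real.sqrt (1/10) :=
          mul_le_mul (by rw [← sqrt110]; exact Real.sqrt_le_sqrt hfs)
            (Real.sqrt_le_sqrt hS2) (Real.sqrt_nonneg _) one_pos.le
      _ = Real.sqrt (1/10) := one_mul _
  have cs2 : ∑ x ∈ sᶜ, Real.sqrt (f x) * Real.sqrt (g x) ≤ Real.sqrt (1/10) := by
    refine le_trans (Real.sum_sqrt_mul_sqrt_le sᶜ hf hg) ?_
    calc Real.sqrt (∑ x ∈ sᶜ, f x) * Real.sqrt (∑ x ∈ sᶜ, g x)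
        ≤ Real.sqrt (1/10) * 1 :=
          mul_le_mul (Real.sqrt_le_sqrt hfc)
            (by rw [← sqrt110]; exact Real.sqrt_le_sqrt hgc)
            (Real.sqrt_nonneg _) (Real.sqrt_nonneg _)
      _ = Real.sqrt (1/10) := mul_one _
  have total : ∑ x : Fin n → Bool, Real.sqrt (f x) * Real.sqrt (g x)
      ≤ 2 * Real.sqrt (1/10) := by
    rw [← Finset.sum_add_sum_compl s]
    linarith
  -- factorize the total as ρ^n
  set ρ : ℝ := ∑ b : Bool, Real.sqrt (w p b * w q b) with hρ
  have hρ0 : 0 ≤ ρ := Finset.sum_nonneg fun b _ => Real.sqrt_nonneg _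
  have hfact : ∑ x : Fin n → Bool, Real.sqrt (f x) * Real.sqrt (g x) = ρ ^ n := by
    have : ∀ x : Fin n → Bool,
        Real.sqrt (f x) * Real.sqrt (g x) = ∏ i, Real.sqrt (w p (x i) * w q (x i)) := by
      intro x
      rw [hfdef, hgdef]
      rw [sqrt_prod _ _ (fun i _ => w_nonneg hp0 hp1 _),
        sqrt_prod _ _ (fun i _ => w_nonneg hq0 hq1 _), ← Finset.prod_mul_distrib]
      exact Finset.prod_congr rfl fun i _ =>
        (Real.sqrt_mul (w_nonneg hp0 hp1 _) _).symm
    rw [Finset.sum_congr rfl fun x _ => this x,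
      sum_prod_w (n := n) (fun b => Real.sqrt (w p b * w q b))]
  rw [hfact] at total
  -- lower bound ρ^2 ≥ 1 - ε^2/2
  have hε2 : ε ^ 2 ≤ 1 := by nlinarith
  have hsq : Real.sqrt (1 - ε ^ 2) ≥ 1 - ε ^ 2 := by
    nlinarith [Real.sq_sqrt (by nlinarith : (0:ℝ) ≤ 1 - ε ^ 2),
      Real.sqrt_nonneg (1 - ε ^ 2)]
  have hρsq : 1 - ε ^ 2 / 2 ≤ ρ ^ 2 := by
    have hwp : ∀ b : Bool, w p b = 1/2 := by intro b; cases b <;> simp [w, hp] <;> norm_num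
    have e1 : ρ = Real.sqrt ((1 + ε)/4) + Real.sqrt ((1 - ε)/4) := by
      rw [hρ, Fintype.sum_bool,
        show w p true * w q true = (1 + ε)/4 by
          show p * q = (1 + ε)/4; rw [hp, hq]; ring,
        show w p false * w q false = (1 - ε)/4 by
          show (1 - p) * (1 - q) = (1 - ε)/4; rw [hp, hq]; ring]
    have ha : (0:ℝ) ≤ (1 - ε)/4 := by linarith
    have hb : (0:ℝ) ≤ (1 + ε)/4 := by linarith
    have e2 : ρ ^ 2 = (1 - ε)/4 + (1 + ε)/4
        + 2 * (Real.sqrt ((1 - ε)/4) * Real.sqrt ((1 + ε)/4)) := by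
      rw [e1, add_sq, Real.sq_sqrt ha, Real.sq_sqrt hb]; ring
    have e3 : Real.sqrt ((1 - ε)/4) * Real.sqrt ((1 + ε)/4)
        = Real.sqrt (1 - ε ^ 2) / 4 := by
      rw [← Real.sqrt_mul ha,
        show ((1 - ε)/4 * ((1 + ε)/4)) = (1 - ε ^ 2) * (1/4) ^ 2 by ring,
        Real.sqrt_mul (by nlinarith) ((1/4:ℝ) ^ 2),
        Real.sqrt_sq (by norm_num : (0:ℝ) ≤ 1/4)]
      ring
    rw [e2, e3]; linarith
  -- conclude
  have hpow : (1 - ε ^ 2 / 2) ^ n ≤ 2/5 := by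
    have hnn : (0:ℝ) ≤ 1 - ε ^ 2 / 2 := by linarith [hε2]
    have h1' : (1 - ε ^ 2 / 2) ^ n ≤ (ρ ^ 2) ^ n := pow_le_pow_left₀ hnn hρsq n
    have h2' : (ρ ^ 2) ^ n = (ρ ^ n) ^ 2 := by ring
    have h3' : (ρ ^ n) ^ 2 ≤ (2 * Real.sqrt (1/10)) ^ 2 :=
      pow_le_pow_left₀ (pow_nonneg hρ0 n) total 2
    have h4' : (2 * Real.sqrt (1/10)) ^ 2 = 2/5 := by
      rw [mul_pow, Real.sq_sqrt (by norm_num : (0:ℝ) ≤ 1/10)]; norm_num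
    linarith [h1', h3', h2' ▸ h1']
  have hbern : 1 - (n:ℝ) * (ε ^ 2 / 2) ≤ (1 - ε ^ 2 / 2) ^ n := by
    have := one_add_mul_le_pow (a := -(ε ^ 2 / 2)) (by linarith [hε2]) n
    calc 1 - (n:ℝ) * (ε ^ 2 / 2) = 1 + (n:ℝ) * (-(ε ^ 2 / 2)) := by ring
      _ ≤ (1 + -(ε ^ 2 / 2)) ^ n := this
      _ = (1 - ε ^ 2 / 2) ^ n := by ring_nf
  rw [div_le_iff₀ (by positivity)]
  nlinarith [hpow, hbern, sq_nonneg ε]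
end

section
/- (Appendix A realizability) In the sparse-reward hard instance with the fixed policy π ≡ a_d, for each level h ∈ {1,…,H} there exists θ_h ∈ ℝ^d such that Q_h(s, a) = ⟨θ_h, φ(s, a)⟩ for every state s at level h and every action a; explicitly, one may take θ₁ = Σ_{c=1}^{d̂} r₀·d̂^{(H−3)/2}·e_c + e_{d̂+1} − e_{d̂+2} + Σ_{c=1}^{d̂} r₀·d̂^{(H−2)/2}·e_{d̂+2+c}; for 2 ≤ h ≤ H−2, θ_h = Σ_{c=1}^{d̂} r₀·d̂^{(H−h−1)/2}·e_c + e_{d̂+1} − e_{d̂+2} + Σ_{c=1}^{d̂} r₀·d̂^{(H−h−2)/2}·e_{d̂+2+c}; θ_{H−1} = Σ_{c=1}^{d̂} r₀·e_c + e_{d̂+1} − e_{d̂+2}; and θ_H = e_{d̂+1} − e_{d̂+2}. -/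
open scoped RealInnerProductSpace

/-!  The sparse-reward hard instance (Appendix A).  Fix `d̂ ≥ 1`, `H ≥ 4`, `d = 2 d̂ + 2`.
At each level `h ∈ {2, …, H}` the states are encoded by `Fin (d̂ + 3)`: indices `< d̂` are the
states `s_h^1, …, s_h^{d̂}`, index `d̂` is the special state `s_h^{d̂+1}`, index `d̂ + 1` is
`s_h^+` and index `d̂ + 2` is `s_h^-`.  Actions `a₁, …, a_d` are encoded by `Fin (2 d̂ + 2)`
(action `a_c` has index `c - 1`), and `e_c` has index `c - 1` in `Fin (2 d̂ + 2)`.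
The fixed policy always plays the last action `a_d`. -/

/-- `sparseEV dh H r0 h s a Vn` is the expectation `E_{s' ~ P(s, a)}[Vn s']` of `Vn` at the
next state, from state `s` at level `h ∈ {2, …, H-1}` taking action `a`. -/
noncomputable def sparseEV (dh H : ℕ) (r0 : ℝ) (h : ℕ) (s : Fin (dh + 3))
    (a : Fin (2 * dh + 2)) (Vn : Fin (dh + 3) → ℝ) : ℝ :=
  if (s : ℕ) < dh then
    (if h + 2 ≤ H then Vn ⟨dh, by omega⟩
     else ((1 + r0) / 2) * Vn ⟨dh + 1, by omega⟩ + ((1 - r0) / 2) * Vn ⟨dh + 2, by omega⟩)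
  else if (s : ℕ) = dh then
    (if ha : (a : ℕ) < dh then Vn ⟨(a : ℕ), by omega⟩
     else ((1 + r0 * Real.sqrt dh ^ (H - h)) / 2) * Vn ⟨dh + 1, by omega⟩
        + ((1 - r0 * Real.sqrt dh ^ (H - h)) / 2) * Vn ⟨dh + 2, by omega⟩)
  else if (s : ℕ) = dh + 1 then Vn ⟨dh + 1, by omega⟩
  else Vn ⟨dh + 2, by omega⟩

/-- `sparseV dh H r0 t` is the value function of the fixed policy `π ≡ a_d` at level `H - t`,
defined by backward recursion; at the last level it equals the (deterministic) reward, which is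
`+1` at `s_H^+`, `-1` at `s_H^-` and `0` elsewhere, and rewards at earlier levels vanish. -/
noncomputable def sparseV (dh H : ℕ) (r0 : ℝ) : ℕ → Fin (dh + 3) → ℝ
  | 0 => fun s => if (s : ℕ) = dh + 1 then 1 else if (s : ℕ) = dh + 2 then -1 else 0
  | t + 1 => fun s =>
      sparseEV dh H r0 (H - (t + 1)) s (Fin.last (2 * dh + 1)) (sparseV dh H r0 t)

/-- The Q-function of the fixed policy `π ≡ a_d` at levels `h ∈ {2, …, H}`:
`Q_H(s, a) = reward(s)` and `Q_h(s, a) = 0 + E_{s' ~ P(s,a)}[V_{h+1}(s')]` for `h < H`. -/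
noncomputable def sparseQ (dh H : ℕ) (r0 : ℝ) (h : ℕ) (s : Fin (dh + 3))
    (a : Fin (2 * dh + 2)) : ℝ :=
  if h = H then sparseV dh H r0 0 s
  else sparseEV dh H r0 h s a (sparseV dh H r0 (H - h - 1))

/-- The Q-function of the fixed policy `π ≡ a_d` at the initial state `s₁` (level 1): from
`s₁`, action `a_c` (`c ≤ d̂`) leads to `s₂^c`, `a_{d̂+1}` to `s₂^+`, `a_{d̂+2}` to `s₂^-`,
and `a_c` (`c ≥ d̂ + 3`) to `s₂^{d̂+1}`; all rewards before the last level are zero. -/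
noncomputable def sparseQ1 (dh H : ℕ) (r0 : ℝ) (a : Fin (2 * dh + 2)) : ℝ :=
  if ha : (a : ℕ) < dh then sparseV dh H r0 (H - 2) ⟨(a : ℕ), by omega⟩
  else if (a : ℕ) = dh then sparseV dh H r0 (H - 2) ⟨dh + 1, by omega⟩
  else if (a : ℕ) = dh + 1 then sparseV dh H r0 (H - 2) ⟨dh + 2, by omega⟩
  else sparseV dh H r0 (H - 2) ⟨dh, by omega⟩

/-- Feature map at the levels `h ∈ {2, …, H}`: `φ(s_h^c, a) = e_c` for `c ≤ d̂`,
`φ(s_h^+, a) = e_{d̂+1}`, `φ(s_h^-, a) = e_{d̂+2}`, `φ(s_h^{d̂+1}, a_c) = e_{d̂+2+c}` for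
`c ≤ d̂`, and `φ(s_h^{d̂+1}, a_c) = d̂^{-1/2}(e₁ + ⋯ + e_{d̂})` for `c ≥ d̂ + 1`. -/
noncomputable def sparsePhi (dh : ℕ)
    (e : Fin (2 * dh + 2) → EuclideanSpace ℝ (Fin (2 * dh + 2)))
    (s : Fin (dh + 3)) (a : Fin (2 * dh + 2)) : EuclideanSpace ℝ (Fin (2 * dh + 2)) :=
  if hs : (s : ℕ) < dh then e ⟨(s : ℕ), by omega⟩
  else if (s : ℕ) = dh then
    (if ha : (a : ℕ) < dh then e ⟨dh + 2 + (a : ℕ), by omega⟩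
     else (Real.sqrt dh)⁻¹ • ∑ c : Fin dh, e ⟨(c : ℕ), by have := c.isLt; omega⟩)
  else if (s : ℕ) = dh + 1 then e ⟨dh, by omega⟩
  else e ⟨dh + 1, by omega⟩

/-- The explicit linear coefficients of Appendix A:
`θ₁ = ∑_{c=1}^{d̂} r₀ d̂^{(H-3)/2} e_c + e_{d̂+1} - e_{d̂+2} + ∑_{c=1}^{d̂} r₀ d̂^{(H-2)/2} e_{d̂+2+c}`;
`θ_h = ∑_{c=1}^{d̂} r₀ d̂^{(H-h-1)/2} e_c + e_{d̂+1} - e_{d̂+2}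
      + ∑_{c=1}^{d̂} r₀ d̂^{(H-h-2)/2} e_{d̂+2+c}` for `2 ≤ h ≤ H - 2`;
`θ_{H-1} = ∑_{c=1}^{d̂} r₀ e_c + e_{d̂+1} - e_{d̂+2}`; and `θ_H = e_{d̂+1} - e_{d̂+2}`. -/
noncomputable def sparseTheta (dh H : ℕ) (r0 : ℝ)
    (e : Fin (2 * dh + 2) → EuclideanSpace ℝ (Fin (2 * dh + 2))) (h : ℕ) :
    EuclideanSpace ℝ (Fin (2 * dh + 2)) :=
  if h = H then e ⟨dh, by omega⟩ - e ⟨dh + 1, by omega⟩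
  else if h = H - 1 then
    (∑ c : Fin dh, r0 • e ⟨(c : ℕ), by have := c.isLt; omega⟩)
      + e ⟨dh, by omega⟩ - e ⟨dh + 1, by omega⟩
  else if h = 1 then
    (∑ c : Fin dh, (r0 * Real.sqrt dh ^ (H - 3)) • e ⟨(c : ℕ), by have := c.isLt; omega⟩)
      + e ⟨dh, by omega⟩ - e ⟨dh + 1, by omega⟩
      + ∑ c : Fin dh,
          (r0 * Real.sqrt dh ^ (H - 2)) • e ⟨dh + 2 + (c : ℕ), by have := c.isLt; omega⟩
  else
    (∑ c : Fin dh, (r0 * Real.sqrt dh ^ (H - h - 1)) • e ⟨(c : ℕ), by have := c.isLt; omega⟩)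
      + e ⟨dh, by omega⟩ - e ⟨dh + 1, by omega⟩
      + ∑ c : Fin dh,
          (r0 * Real.sqrt dh ^ (H - h - 2)) • e ⟨dh + 2 + (c : ℕ), by have := c.isLt; omega⟩


private lemma sparseV_formula (dh H : ℕ) (hdh : 1 ≤ dh) (hH : 4 ≤ H) (r0 : ℝ) :
    ∀ t, t + 1 ≤ H → ∀ s : Fin (dh + 3),
    sparseV dh H r0 t s =
      if (s : ℕ) = dh + 1 then 1 else if (s : ℕ) = dh + 2 then -1
      else if t = 0 then 0
      else if (s : ℕ) = dh then r0 * Real.sqrt dh ^ t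
      else r0 * Real.sqrt dh ^ (t - 1) := by
  intro t
  induction t with
  | zero => intro _ s; simp [sparseV]
  | succ t ih =>
    intro ht s
    have ih := ih (by omega)
    have hsv := s.isLt
    have hHe : H - (H - (t + 1)) = t + 1 := by omega
    rw [sparseV]
    simp only [sparseEV, ih, Fin.val_mk, Fin.val_last, hHe, Nat.add_sub_cancel]
    split_ifs <;> try (exfalso; omega)
    all_goals try simp_all
    all_goals try ring
    all_goals obtain rfl : t = 0 := by omega
    all_goals (rw [pow_zero]; ring)


noncomputable def genTheta (dh : ℕ)
    (b : Fin (2 * dh + 2) → EuclideanSpace ℝ (Fin (2 * dh + 2))) (r1 r2 : ℝ) :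
    EuclideanSpace ℝ (Fin (2 * dh + 2)) :=
  (∑ c : Fin dh, r1 • b ⟨(c : ℕ), by have := c.isLt; omega⟩)
    + b ⟨dh, by omega⟩ - b ⟨dh + 1, by omega⟩
    + ∑ c : Fin dh, r2 • b ⟨dh + 2 + (c : ℕ), by have := c.isLt; omega⟩

private lemma sum_ite_val (n : ℕ) (r : ℝ) (m k : ℕ) :
    ∑ c : Fin n, (if k + (c : ℕ) = m then r else 0)
      = if k ≤ m ∧ m < k + n then r else 0 := by
  by_cases h : k ≤ m ∧ m < k + n
  · rw [if_pos h, Finset.sum_eq_single (⟨m - k, by omega⟩ : Fin n)]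
    · rw [if_pos (by simp; omega)]
    · intro c _ hc
      rw [if_neg]
      intro hkc
      exact hc (by apply Fin.ext; simp; omega)
    · intro hc; exact absurd (Finset.mem_univ _) hc
  · rw [if_neg h, Finset.sum_eq_zero]
    intro c _
    rw [if_neg]
    have := c.isLt
    omega

private lemma genTheta_inner (dh : ℕ)
    (b : OrthonormalBasis (Fin (2 * dh + 2)) ℝ (EuclideanSpace ℝ (Fin (2 * dh + 2))))
    (r1 r2 : ℝ) (i : Fin (2 * dh + 2)) :
    ⟪genTheta dh (⇑b) r1 r2, b i⟫ =
      (if (i : ℕ) < dh then r1 else 0) + (if (i : ℕ) = dh then 1 else 0)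
      - (if (i : ℕ) = dh + 1 then 1 else 0) + (if dh + 2 ≤ (i : ℕ) then r2 else 0) := by
  have hb : ∀ j k : Fin (2 * dh + 2), ⟪b j, b k⟫ = if j = k then (1:ℝ) else 0 :=
    orthonormal_iff_ite.mp b.orthonormal
  have hiv := i.isLt
  simp only [genTheta, inner_add_left, inner_sub_left, sum_inner, real_inner_smul_left, hb,
    mul_ite, mul_one, mul_zero, Fin.ext_iff, Fin.val_mk]
  rw [show (∑ c : Fin dh, if (c : ℕ) = (i : ℕ) then r1 else 0)
      = ∑ c : Fin dh, if 0 + (c : ℕ) = (i : ℕ) then r1 else 0 by simp,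
    sum_ite_val, sum_ite_val]
  have e1 : (0 ≤ (i : ℕ) ∧ (i : ℕ) < 0 + dh) = ((i : ℕ) < dh) := by
    rw [eq_iff_iff]; omega
  have e2 : (dh = (i : ℕ)) = ((i : ℕ) = dh) := by rw [eq_iff_iff]; omega
  have e3 : (dh + 1 = (i : ℕ)) = ((i : ℕ) = dh + 1) := by rw [eq_iff_iff]; omega
  have e4 : (dh + 2 ≤ (i : ℕ) ∧ (i : ℕ) < dh + 2 + dh) = (dh + 2 ≤ (i : ℕ)) := by
    rw [eq_iff_iff]; omega
  simp only [e1, e2, e3, e4]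

private lemma genTheta_inner_mix (dh : ℕ)
    (b : OrthonormalBasis (Fin (2 * dh + 2)) ℝ (EuclideanSpace ℝ (Fin (2 * dh + 2))))
    (r1 r2 k : ℝ) :
    ⟪genTheta dh (⇑b) r1 r2,
      k • ∑ c : Fin dh, b ⟨(c : ℕ), by have := c.isLt; omega⟩⟫ = k * (dh * r1) := by
  rw [real_inner_smul_right, inner_sum]
  have key : ∀ c : Fin dh,
      ⟪genTheta dh (⇑b) r1 r2, b ⟨(c : ℕ), by have := c.isLt; omega⟩⟫ = r1 := by
    intro c
    have hc := c.isLt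
    rw [genTheta_inner dh b r1 r2 ⟨(c : ℕ), by omega⟩]
    simp only [Fin.val_mk]
    rw [if_pos hc, if_neg (by omega), if_neg (by omega), if_neg (by omega)]
    ring
  rw [Finset.sum_congr rfl (fun c _ => key c)]
  simp [Finset.sum_const, Finset.card_univ, mul_comm]

private lemma sparseTheta_eq (dh H : ℕ) (hdh : 1 ≤ dh) (hH : 4 ≤ H) (r0 : ℝ)
    (b : Fin (2 * dh + 2) → EuclideanSpace ℝ (Fin (2 * dh + 2))) (h : ℕ) :
    sparseTheta dh H r0 b h =
      if h = H then genTheta dh b 0 0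
      else if h = H - 1 then genTheta dh b r0 0
      else if h = 1 then
        genTheta dh b (r0 * Real.sqrt dh ^ (H - 3)) (r0 * Real.sqrt dh ^ (H - 2))
      else
        genTheta dh b (r0 * Real.sqrt dh ^ (H - h - 1)) (r0 * Real.sqrt dh ^ (H - h - 2)) := by
  rw [sparseTheta, genTheta]
  split_ifs <;> simp [genTheta]
set_option maxHeartbeats 2000000 in
/-- Appendix A realizability: in the sparse-reward hard instance with the fixed policy
`π ≡ a_d`, for each level `h ∈ {1, …, H}` the Q-function is linear in the features, with the
explicit coefficients `sparseTheta`: at the initial level `Q₁(s₁, a) = ⟪θ₁, φ(s₁, a)⟫` where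
`φ(s₁, a_c) = e_c`, and at every level `h ∈ {2, …, H}`, `Q_h(s, a) = ⟪θ_h, φ(s, a)⟫`. -/
theorem stmt14 (dh H : ℕ) (hdh : 1 ≤ dh) (hH : 4 ≤ H) (r0 : ℝ)
    (hr00 : 0 ≤ r0) (hr01 : r0 ≤ (Real.sqrt dh ^ (H - 2))⁻¹)
    (b : OrthonormalBasis (Fin (2 * dh + 2)) ℝ (EuclideanSpace ℝ (Fin (2 * dh + 2)))) :
    (∀ a : Fin (2 * dh + 2),
      sparseQ1 dh H r0 a = ⟪sparseTheta dh H r0 (⇑b) 1, b a⟫) ∧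
    (∀ h, 2 ≤ h → h ≤ H → ∀ (s : Fin (dh + 3)) (a : Fin (2 * dh + 2)),
      sparseQ dh H r0 h s a = ⟪sparseTheta dh H r0 (⇑b) h, sparsePhi dh (⇑b) s a⟫) := by
  have hdr : (1 : ℝ) ≤ (dh : ℝ) := by exact_mod_cast hdh
  have hs1 : (1 : ℝ) ≤ Real.sqrt dh := by
    rw [show (1 : ℝ) = Real.sqrt 1 by simp]
    exact Real.sqrt_le_sqrt hdr
  have hs0 : Real.sqrt dh ≠ 0 := by linarith
  have hdsq : (dh : ℝ) = Real.sqrt dh * Real.sqrt dh := (Real.mul_self_sqrt (by linarith)).symm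
  have hd2 : (Real.sqrt dh)⁻¹ * (dh : ℝ) = Real.sqrt dh := by
    rw [inv_mul_eq_div, div_eq_iff hs0]
    exact hdsq
  have hkey : ∀ x : ℝ, (Real.sqrt dh)⁻¹ * ((dh : ℝ) * x) = Real.sqrt dh * x := by
    intro x
    rw [← mul_assoc, hd2]
  constructor
  · intro a
    have hav := a.isLt
    rw [sparseTheta_eq dh H hdh hH r0 (⇑b), if_neg (by omega), if_neg (by omega), if_pos rfl,
      genTheta_inner]
    simp only [sparseQ1, sparseV_formula dh H hdh hH r0 (H - 2) (by omega), Fin.val_mk]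
    split_ifs <;>
      first
        | ring1
        | (exfalso; omega)
        | (rw [show H - 2 - 1 = H - 3 from by omega]; ring)
  · intro h h2 hHle s a
    have hsv := s.isLt
    have hav := a.isLt
    by_cases hhH : h = H
    · rw [sparseQ, if_pos hhH, sparseTheta_eq dh H hdh hH r0 (⇑b), if_pos hhH]
      simp only [sparsePhi, sparseV_formula dh H hdh hH r0 0 (by omega), Fin.val_mk]
      split_ifs <;>
        simp only [genTheta_inner, genTheta_inner_mix, Fin.val_mk] <;>
        (try split_ifs) <;>
        first
          | ring1
          | (exfalso; omega)
    · have hlt : h < H := lt_of_le_of_ne hHle hhH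
      rw [sparseQ, if_neg hhH, sparseTheta_eq dh H hdh hH r0 (⇑b), if_neg hhH]
      by_cases hh1 : h = H - 1
      · rw [if_pos hh1]
        simp only [sparseEV, sparsePhi, sparseV_formula dh H hdh hH r0 (H - h - 1) (by omega),
          Fin.val_mk]
        split_ifs <;>
          simp only [genTheta_inner, genTheta_inner_mix, Fin.val_mk] <;>
          (try split_ifs) <;>
          first
            | ring1
            | (exfalso; omega)
            | (rw [hkey]
               conv_lhs => rw [show H - h = 0 + 1 from by omega]
               rw [pow_succ, pow_zero]; ring1)
            | (rw [hkey]
               conv_lhs => rw [show H - h = H - h - 1 + 1 from by omega]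
               rw [pow_succ]; ring1)
            | (rw [show H - h - 1 - 1 = H - h - 2 from by omega]; ring1)
      · rw [if_neg hh1, if_neg (by omega)]
        simp only [sparseEV, sparsePhi, sparseV_formula dh H hdh hH r0 (H - h - 1) (by omega),
          Fin.val_mk]
        split_ifs <;>
          simp only [genTheta_inner, genTheta_inner_mix, Fin.val_mk] <;>
          (try split_ifs) <;>
          first
            | ring1
            | (exfalso; omega)
            | (rw [hkey]
               conv_lhs => rw [show H - h = 0 + 1 from by omega]
               rw [pow_succ, pow_zero]; ring1)
            | (rw [hkey]
               conv_lhs => rw [show H - h = H - h - 1 + 1 from by omega]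
               rw [pow_succ]; ring1)
            | (rw [show H - h - 1 - 1 = H - h - 2 from by omega]; ring1)
end

section
/- In the sparse-reward hard instance with the fixed policy π ≡ a_d, the value at the initial state satisfies Q₁(s₁, a_d) = r₀·d̂^{(H−2)/2}. Consequently, the value of this policy started at s₁ equals 0 when r₀ = 0 and equals 1 when r₀ = d̂^{−(H−2)/2}. -/
lemma sparseV_pm (dh H : ℕ) (r0 : ℝ) (hdh : 1 ≤ dh) : ∀ t,
    sparseV dh H r0 t ⟨dh + 1, by omega⟩ = 1 ∧
    sparseV dh H r0 t ⟨dh + 2, by omega⟩ = -1 := by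
  intro t
  induction t with
  | zero => simp [sparseV]
  | succ t ih =>
    constructor <;> simp [sparseV, sparseEV, ih.1, ih.2]

/-- In the sparse-reward hard instance with the fixed policy `π ≡ a_d`, the value at the
initial state satisfies `Q₁(s₁, a_d) = r₀ d̂^{(H-2)/2}`; consequently this value equals `0`
when `r₀ = 0` and equals `1` when `r₀ = d̂^{-(H-2)/2}`. -/
theorem stmt15 (dh H : ℕ) (hdh : 1 ≤ dh) (hH : 4 ≤ H) (r0 : ℝ)
    (hr00 : 0 ≤ r0) (hr01 : r0 ≤ (Real.sqrt dh ^ (H - 2))⁻¹) :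
    sparseQ1 dh H r0 (Fin.last (2 * dh + 1)) = r0 * Real.sqrt dh ^ (H - 2) ∧
    (r0 = 0 → sparseQ1 dh H r0 (Fin.last (2 * dh + 1)) = 0) ∧
    (r0 = (Real.sqrt dh ^ (H - 2))⁻¹ →
      sparseQ1 dh H r0 (Fin.last (2 * dh + 1)) = 1) := by
  have hlast : ((Fin.last (2 * dh + 1) : Fin (2 * dh + 2)) : ℕ) = 2 * dh + 1 := rfl
  have hQ : sparseQ1 dh H r0 (Fin.last (2 * dh + 1)) = r0 * Real.sqrt dh ^ (H - 2) := by
    rw [sparseQ1]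
    rw [dif_neg (by omega), if_neg (by omega), if_neg (by omega)]
    have hH2 : H - 2 = (H - 3) + 1 := by omega
    rw [hH2, sparseV]
    have hh : H - (H - 3 + 1) = 2 := by omega
    rw [hh]; unfold sparseEV
    simp only [Fin.val_last, Fin.val_mk, lt_irrefl, if_false, if_pos rfl]
    rw [dif_neg (by omega)]
    rw [(sparseV_pm dh H r0 hdh (H - 3)).1, (sparseV_pm dh H r0 hdh (H - 3)).2]
    rw [if_true, hH2]
    ring
  refine ⟨hQ, fun h0 => by rw [hQ, h0, zero_mul], fun h1 => ?_⟩
  rw [hQ, h1]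
  have hpos : (0:ℝ) < Real.sqrt dh ^ (H - 2) := by
    apply pow_pos
    apply Real.sqrt_pos.2
    exact_mod_cast Nat.lt_of_lt_of_le Nat.zero_lt_one hdh
  exact inv_mul_cancel₀ (ne_of_gt hpos)
end
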